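/- Let C be an abelian category, D a full reflective subcategory of C with reflector F and inclusion G, and suppose D is abelian. If X is a finite diagram in D such that GX has a limit in C, then X has a limit in D, naturally isomorphic to F(lim GX). -/

import Mathlib

open CategoryTheory CategoryTheory.Limits

/-- Let `D` be a full reflective abelian subcategory of an abelian
category `C`, with reflector `F` and inclusion `G`. If `X : J ⥤ D` is a finite
diagram such that `G ∘ X` has a limit in `C`, then `X` has a limit in `D`,
naturally isomorphic to `F(lim GX)`. -/
theorem finite_limits_in_reflective_abelian_subcategory
    {C : Type*} [Category C] [Abelian C] (P : C → Prop)
    [Abelian (ObjectProperty.FullSubcategory P)]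
    (F : C ⥤ ObjectProperty.FullSubcategory P)
    (adj : F ⊣ ObjectProperty.ι P)
    {J : Type} [SmallCategory J] [FinCategory J] (X : J ⥤ ObjectProperty.FullSubcategory P)
    [HasLimit (X ⋙ ObjectProperty.ι P)] :
    ∃ (c : Cone X) (_ : IsLimit c),
      Nonempty (c.pt ≅ F.obj (limit (X ⋙ ObjectProperty.ι P))) := by
  haveI : Reflective (ObjectProperty.ι P) := { L := F, adj := adj }
  haveI := monadicCreatesLimits (ObjectProperty.ι P)
  haveI : HasLimit X := hasLimit_of_created X (ObjectProperty.ι P)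
  refine ⟨limit.cone X, limit.isLimit X, ⟨?_⟩⟩
  haveI : IsIso adj.counit := adj.counit_isIso_of_R_fully_faithful
  calc (limit.cone X).pt
      ≅ F.obj ((ObjectProperty.ι P).obj (limit X)) :=
        (asIso (adj.counit.app (limit X))).symm
    _ ≅ F.obj (limit (X ⋙ ObjectProperty.ι P)) :=
        F.mapIso (preservesLimitIso (ObjectProperty.ι P) X)
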